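/- arXiv:math/0503323 — 2 statements merged into one kernel-verified Lean document; each statement's English description precedes it below -/
import Mathlib

section
/- Let M be a complex manifold of dimension μ with a commutative associative multiplication ⋆ on the tangent bundle, and suppose there exist local coordinates u_1, …, u_μ such that ∂/∂u_i ⋆ ∂/∂u_j = δ_{ij} ∂/∂u_i for all i, j (canonical/idempotent coordinates). Then the multiplication satisfies the F-manifold integrability condition: Lie_{X⋆Y}(⋆) = X ⋆ Lie_Y(⋆) + Lie_X(⋆) ⋆ Y for all vector fields X, Y. -/
open Finset

/-- A vector field on (an open piece of) `ℂ^μ`, written in the coordinate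
basis `∂/∂u_1, …, ∂/∂u_μ` of canonical coordinates. -/
abbrev VF (μ : ℕ) := (Fin μ → ℂ) → (Fin μ → ℂ)

/-- In canonical coordinates (`∂/∂u_i ⋆ ∂/∂u_j = δ_ij ∂/∂u_i`), the
multiplication of vector fields is componentwise. -/
def starVF {μ : ℕ} (X Y : VF μ) : VF μ := fun x i => X x i * Y x i

/-- The Lie bracket of vector fields, `[X,Y]^i = Σ_j X^j ∂_j Y^i − Y^j ∂_j X^i`. -/
noncomputable def bracketVF {μ : ℕ} (X Y : VF μ) : VF μ := fun x i =>
  ∑ j, (X x j * fderiv ℂ (fun y => Y y i) x (Pi.single j 1)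
        - Y x j * fderiv ℂ (fun y => X y i) x (Pi.single j 1))

/-- The Lie derivative of the multiplication:
`(Lie_X ⋆)(Y,Z) = [X, Y⋆Z] − [X,Y]⋆Z − Y⋆[X,Z]`. -/
noncomputable def lieStarVF {μ : ℕ} (X Y Z : VF μ) : VF μ :=
  bracketVF X (starVF Y Z) - starVF (bracketVF X Y) Z - starVF Y (bracketVF X Z)

/-- in canonical (idempotent) coordinates the multiplication on the
tangent bundle satisfies the F-manifold integrability condition
`Lie_{X⋆Y}(⋆) = X ⋆ Lie_Y(⋆) + Lie_X(⋆) ⋆ Y`. -/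
theorem stmt9 (μ : ℕ) (X Y Z W : VF μ)
    (hX : ContDiff ℂ ⊤ X) (hY : ContDiff ℂ ⊤ Y)
    (hZ : ContDiff ℂ ⊤ Z) (hW : ContDiff ℂ ⊤ W) :
    lieStarVF (starVF X Y) Z W =
      starVF X (lieStarVF Y Z W) + starVF (lieStarVF X Z W) Y := by
  funext x i
  have dX : ∀ k, Differentiable ℂ (fun y => X y k) := fun k =>
    differentiable_pi.mp (hX.differentiable (by simp)) k
  have dY : ∀ k, Differentiable ℂ (fun y => Y y k) := fun k =>
    differentiable_pi.mp (hY.differentiable (by simp)) k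
  have dZ : ∀ k, Differentiable ℂ (fun y => Z y k) := fun k =>
    differentiable_pi.mp (hZ.differentiable (by simp)) k
  have dW : ∀ k, Differentiable ℂ (fun y => W y k) := fun k =>
    differentiable_pi.mp (hW.differentiable (by simp)) k
  have key : ∀ (f g : VF μ), Differentiable ℂ (fun y => f y i) →
      Differentiable ℂ (fun y => g y i) → ∀ j : Fin μ,
      fderiv ℂ (fun y => f y i * g y i) x (Pi.single j 1) =
        f x i * fderiv ℂ (fun y => g y i) x (Pi.single j 1)
        + g x i * fderiv ℂ (fun y => f y i) x (Pi.single j 1) := by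
    intro f g hf hg j
    rw [fderiv_fun_mul hf.differentiableAt hg.differentiableAt]
    simp
  have hZW := key Z W (dZ i) (dW i)
  have hXY := key X Y (dX i) (dY i)
  simp only [lieStarVF, starVF, bracketVF, Pi.sub_apply, Pi.add_apply, hZW, hXY,
    Finset.sum_mul, Finset.mul_sum, ← Finset.sum_sub_distrib, ← Finset.sum_add_distrib]
  refine Finset.sum_congr rfl fun j _ => ?_
  ring
end

section
/- Let R be a Noetherian local ring and φ: R^m → R^n a map of free modules with m > n, such that the ideal I_n(φ) of maximal (n×n) minors has grade (depth) equal to m − n + 1 (the maximal possible). Then the kernel of φ is generated by the vectors of signed maximal minors obtained by the Eagon–Northcott construction; in the case m = n+1, ker φ is the free rank-1 module generated by the vector of signed n×n minors of the matrix of φ. -/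
/-!
Stacking a row `x` on top of `A` gives a square matrix whose determinant is `x ⬝ᵥ w` and whose
adjugate has first column `w`. The adjugate identities then give `A *ᵥ w = 0` and, for `v` in the
kernel, the rank-one relations `w i * v j = v i * w j`. For `a, b` in the ideal of the `w i`,
these relations give `a • v = tₐ • w` and `b • v = t_b • w`; then `b tₐ - a t_b` kills that ideal,
hence kills `a`, so `b tₐ = a t_b`. As `b` is regular modulo `a`, `tₐ = a s`, and cancelling `a`
gives `v = s • w`.
-/

open RingTheory.Sequence

namespace Matrix

section consRow

variable {α : Type*} {m : ℕ} {n' : Type*}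

def consRow (x : n' → α) (A : Matrix (Fin m) n' α) : Matrix (Fin (m + 1)) n' α :=
  of (vecCons x (of.symm A))

@[simp]
theorem consRow_zero (x : n' → α) (A : Matrix (Fin m) n' α) : consRow x A 0 = x :=
  rfl

@[simp]
theorem consRow_succ (x : n' → α) (A : Matrix (Fin m) n' α) (k : Fin m) :
    consRow x A k.succ = A k :=
  rfl

theorem consRow_mulVec [NonUnitalNonAssocSemiring α] [Fintype n'] (x v : n' → α)
    (A : Matrix (Fin m) n' α) : consRow x A *ᵥ v = vecCons (x ⬝ᵥ v) (A *ᵥ v) :=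
  cons_mulVec x (of.symm A) v

end consRow

variable {R : Type*} [CommRing R] {n : ℕ}

def signedMaxMinors (A : Matrix (Fin n) (Fin (n + 1)) R) : Fin (n + 1) → R :=
  fun i => (-1) ^ (i : ℕ) * (A.submatrix id i.succAbove).det

theorem det_submatrix_succAbove_eq (A : Matrix (Fin n) (Fin (n + 1)) R) (i : Fin (n + 1)) :
    (A.submatrix id i.succAbove).det = (-1) ^ (i : ℕ) * A.signedMaxMinors i := by
  rw [signedMaxMinors, ← mul_assoc, ← mul_pow, neg_one_mul, neg_neg, one_pow, one_mul]

theorem det_consRow (x : Fin (n + 1) → R) (A : Matrix (Fin n) (Fin (n + 1)) R) :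
    (consRow x A).det = x ⬝ᵥ A.signedMaxMinors := by
  rw [det_succ_row_zero, dotProduct]
  refine Finset.sum_congr rfl fun j _ => ?_
  have : (consRow x A).submatrix Fin.succ j.succAbove = A.submatrix id j.succAbove := rfl
  rw [signedMaxMinors, this, consRow_zero]
  ring

theorem adjugate_consRow_apply_zero (x : Fin (n + 1) → R)
    (A : Matrix (Fin n) (Fin (n + 1)) R) (j : Fin (n + 1)) :
    adjugate (consRow x A) j 0 = A.signedMaxMinors j := by
  have : (consRow x A).updateRow 0 (Pi.single j 1) = consRow (Pi.single j 1) A := by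
    ext i : 1; refine Fin.cases ?_ (fun k => ?_) i <;> simp
  rw [adjugate_apply, this, det_consRow, single_one_dotProduct]

theorem mulVec_signedMaxMinors (A : Matrix (Fin n) (Fin (n + 1)) R) :
    A *ᵥ A.signedMaxMinors = 0 := by
  ext k
  have h := congrFun₂ (mul_adjugate (consRow 0 A)) k.succ 0
  simpa [mul_apply, adjugate_consRow_apply_zero, mulVec, dotProduct] using h

theorem signedMaxMinors_mul_eq_mul_signedMaxMinors (A : Matrix (Fin n) (Fin (n + 1)) R)
    {v : Fin (n + 1) → R} (hv : A *ᵥ v = 0) (i j : Fin (n + 1)) :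
    A.signedMaxMinors i * v j = v i * A.signedMaxMinors j := by
  set M := consRow (Pi.single i 1) A with hM
  have hMv : M *ᵥ v = Pi.single 0 (v i) := by
    rw [hM, consRow_mulVec, hv, single_one_dotProduct]
    ext k; refine Fin.cases ?_ (fun k => ?_) k <;> simp
  have h := congrFun (mulVec_mulVec v M.adjugate M) j
  rw [adjugate_mul, hMv, smul_mulVec, one_mulVec, hM, det_consRow, single_one_dotProduct] at h
  simpa [mulVec_single, adjugate_consRow_apply_zero, mul_comm] using h.symm

end Matrix

section Regular

variable {R : Type*} [CommRing R] {ι : Type*}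

theorem exists_smul_eq_smul_of_mul_eq_mul [Fintype ι] {w v : ι → R}
    (hwv : ∀ i j, w i * v j = v i * w j) {a : R} (ha : a ∈ Ideal.span (Set.range w)) :
    ∃ t : R, a • v = t • w := by
  obtain ⟨c, rfl⟩ := (Submodule.mem_span_range_iff_exists_fun R).mp ha
  refine ⟨∑ i, c i * v i, funext fun j => ?_⟩
  simp only [Pi.smul_apply, smul_eq_mul, Finset.sum_mul]
  refine Finset.sum_congr rfl fun i _ => ?_
  rw [mul_assoc, hwv, mul_assoc]

theorem mul_eq_zero_of_smul_eq_zero {w : ι → R} {c a : R} (hc : c • w = 0)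
    (ha : a ∈ Ideal.span (Set.range w)) : c * a = 0 := by
  have : Ideal.span (Set.range w) ≤ LinearMap.ker (LinearMap.mulLeft R c) :=
    Ideal.span_le.mpr (by rintro _ ⟨i, rfl⟩; exact congrFun hc i)
  exact this ha

theorem exists_eq_mul_of_mul_eq_mul {a b x y : R} (hb : IsSMulRegular (QuotSMulTop a R) b)
    (h : b * x = a * y) : ∃ s, x = a * s := by
  have hmk : b • (Submodule.Quotient.mk x : QuotSMulTop a R) = b • 0 := by
    rw [smul_zero, ← Submodule.Quotient.mk_smul, Submodule.Quotient.mk_eq_zero, smul_eq_mul, h]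
    exact Submodule.smul_mem_pointwise_smul y a ⊤ trivial
  obtain ⟨s, -, hs⟩ := (Submodule.Quotient.mk_eq_zero _).mp (hb hmk)
  exact ⟨s, hs.symm⟩

theorem mem_span_singleton_of_mul_eq_mul [Fintype ι] {w v : ι → R}
    (hwv : ∀ i j, w i * v j = v i * w j) {a b : R} (ha : a ∈ Ideal.span (Set.range w))
    (hb : b ∈ Ideal.span (Set.range w)) (hab : IsWeaklyRegular R [a, b]) :
    v ∈ Submodule.span R {w} := by
  rw [isWeaklyRegular_cons_iff, isWeaklyRegular_singleton_iff] at hab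
  obtain ⟨ha_reg, hb_reg⟩ := hab
  obtain ⟨ta, hta⟩ := exists_smul_eq_smul_of_mul_eq_mul hwv ha
  obtain ⟨tb, htb⟩ := exists_smul_eq_smul_of_mul_eq_mul hwv hb
  have hkill : (b * ta - a * tb) • w = 0 := by
    rw [sub_smul, mul_smul, mul_smul, ← hta, ← htb, smul_comm, sub_self]
  have hbta : b * ta = a * tb := by
    refine sub_eq_zero.mp (ha_reg.right_eq_zero_of_smul ?_)
    rw [smul_eq_mul, mul_comm]
    exact mul_eq_zero_of_smul_eq_zero hkill ha
  obtain ⟨s, rfl⟩ := exists_eq_mul_of_mul_eq_mul hb_reg hbta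
  refine Submodule.mem_span_singleton.mpr ⟨s, funext fun j => ha_reg ?_⟩
  have hj := congrFun hta j
  simp only [Pi.smul_apply, smul_eq_mul] at hj ⊢
  rw [hj, mul_assoc]

end Regular

theorem stmt17_general {R : Type*} [CommRing R]
    (n : ℕ) (A : Matrix (Fin n) (Fin (n + 1)) R)
    (w : Fin (n + 1) → R)
    (hw : ∀ i, w i = (-1 : R) ^ (i : ℕ) * (A.submatrix id i.succAbove).det)
    (hgrade : ∃ a b : R,
      a ∈ Ideal.span (Set.range fun i : Fin (n + 1) => (A.submatrix id i.succAbove).det) ∧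
      b ∈ Ideal.span (Set.range fun i : Fin (n + 1) => (A.submatrix id i.succAbove).det) ∧
      RingTheory.Sequence.IsRegular R [a, b]) :
    LinearMap.ker A.mulVecLin = Submodule.span R {w} := by
  obtain rfl : w = A.signedMaxMinors := funext hw
  obtain ⟨a, b, ha, hb, hab⟩ := hgrade
  have hspan : Ideal.span (Set.range fun i : Fin (n + 1) => (A.submatrix id i.succAbove).det)
      ≤ Ideal.span (Set.range A.signedMaxMinors) := by
    refine Ideal.span_le.mpr (Set.range_subset_iff.mpr fun i => ?_)
    rw [SetLike.mem_coe, A.det_submatrix_succAbove_eq]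
    exact Ideal.mul_mem_left _ _ (Ideal.subset_span ⟨i, rfl⟩)
  refine le_antisymm (fun v hv => ?_) ?_
  · exact mem_span_singleton_of_mul_eq_mul (A.signedMaxMinors_mul_eq_mul_signedMaxMinors hv)
      (hspan ha) (hspan hb) hab.toIsWeaklyRegular
  · rw [Submodule.span_le, Set.singleton_subset_iff]
    exact A.mulVec_signedMaxMinors

/-- Eagon–Northcott, case `m = n+1`: if `φ : R^{n+1} → R^n` is
given by an `n×(n+1)` matrix `A` over a Noetherian local ring and the ideal of
maximal `n×n` minors has grade `2` (the maximal possible, witnessed by a regular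
sequence of length `2` inside it), then `ker φ` is the free rank-1 module
generated by the vector of signed maximal minors. -/
theorem stmt17 {R : Type*} [CommRing R] [IsNoetherianRing R] [IsLocalRing R]
    (n : ℕ) (A : Matrix (Fin n) (Fin (n + 1)) R)
    (w : Fin (n + 1) → R)
    (hw : ∀ i, w i = (-1 : R) ^ (i : ℕ) * (A.submatrix id i.succAbove).det)
    (hgrade : ∃ a b : R,
      a ∈ Ideal.span (Set.range fun i : Fin (n + 1) => (A.submatrix id i.succAbove).det) ∧
      b ∈ Ideal.span (Set.range fun i : Fin (n + 1) => (A.submatrix id i.succAbove).det) ∧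
      RingTheory.Sequence.IsRegular R [a, b]) :
    LinearMap.ker A.mulVecLin = Submodule.span R {w} :=
  stmt17_general n A w hw hgrade
end
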